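/- arXiv:2410.12712 — 2 statements merged into one kernel-verified Lean document; each statement's English description precedes it below -/
import Mathlib

section
/- Let d, s, T ≥ 1 be natural numbers and π a permutation of Fin T. Let P_π^{ds} be the permutation operator on (ℂ^{d·s})^{⊗T}, realized as the matrix indexed by functions F, G : Fin T → Fin d × Fin s whose (F, G) entry is 1 if F = G ∘ π⁻¹ and 0 otherwise. Define the partial trace over all s-dimensional factors as the matrix Q indexed by f, g : Fin T → Fin d with Q(f, g) = Σ_{h : Fin T → Fin s} P_π^{ds}(l ↦ (f l, h l), l ↦ (g l, h l)). Then Q = s^{c(π)} • P_π^{d}, where P_π^{d} is the permutation operator on (ℂ^d)^{⊗T} and c(π) is the number of cycles of π counting fixed points. -/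
open Matrix

/-- The number of cycles of a permutation of `Fin T`, counting fixed points as cycles of
length one; equivalently `T − (π.cycleType.sum − π.cycleType.card)`. -/
def cycleCount {T : ℕ} (π : Equiv.Perm (Fin T)) : ℕ :=
  T - (π.cycleType.sum - π.cycleType.card)

/-- The permutation operator `P_π` on `(ℂ^d)^{⊗T}`: its `(f, g)` entry is `1` if
`f = g ∘ π⁻¹` and `0` otherwise. -/
def permOp (d T : ℕ) (π : Equiv.Perm (Fin T)) :
    Matrix (Fin T → Fin d) (Fin T → Fin d) ℂ :=
  fun f g => if f = g ∘ ⇑π⁻¹ then 1 else 0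

/-!
The pair condition `(f, h) = (g, h) ∘ π⁻¹` splits into `f = g ∘ π⁻¹` and `h ∘ π = h`, so the
partial trace counts the functions `h : Fin T → Fin s` that are constant on the cycles of `π`,
i.e. the functions on the quotient by `SameCycle`. A class of that quotient is either a fixed
point or the support of a cycle factor, so there are as many classes as parts of
`π.partition`, which is `c(π)`.
-/

namespace Equiv.Perm

variable {α : Type*} (π : Perm α)

theorem SameCycle.apply_eq_of_comp_eq [Finite α] {β : Type*} {h : α → β} (hh : h ∘ π = h)
    {x y : α} (hxy : π.SameCycle x y) : h x = h y := by
  obtain ⟨n, rfl⟩ := hxy.exists_nat_pow_eq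
  rw [← iterate_eq_pow, ← Function.comp_apply (f := h), Function.iterate_invariant hh]

def compEqSelfEquiv [Finite α] (β : Type*) :
    {h : α → β // h ∘ π = h} ≃ (Quotient (SameCycle.setoid π) → β) where
  toFun h := Quotient.lift h.1 fun _ _ => SameCycle.apply_eq_of_comp_eq π h.2
  invFun g := ⟨g ∘ Quotient.mk _,
    funext fun _ => congrArg g (Quotient.sound (sameCycle_apply_left.2 SameCycle.rfl))⟩
  left_inv _ := rfl
  right_inv _ := funext fun q => Quotient.inductionOn q fun _ => rfl

variable [Fintype α] [DecidableEq α]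

def fixedPointOrCycleOf (x : α) : Function.fixedPoints π ⊕ π.cycleFactorsFinset :=
  if hx : π x = x then .inl ⟨x, hx⟩
  else .inr ⟨π.cycleOf x, cycleOf_mem_cycleFactorsFinset_iff.2 (mem_support.2 hx)⟩

theorem fixedPointOrCycleOf_eq_iff {x y : α} :
    π.fixedPointOrCycleOf x = π.fixedPointOrCycleOf y ↔ π.SameCycle x y := by
  unfold fixedPointOrCycleOf
  by_cases hx : π x = x <;> by_cases hy : π y = y
  · simp only [hx, hy, dite_true, Sum.inl.injEq, Subtype.ext_iff]
    exact ⟨fun h => h ▸ .rfl, fun h => h.eq_of_left hx⟩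
  · simp only [hx, hy, dite_true, dite_false, reduceCtorEq, false_iff]
    exact fun h => hy (h.apply_eq_self_iff.1 hx)
  · simp only [hx, hy, dite_true, dite_false, reduceCtorEq, false_iff]
    exact fun h => hx (h.apply_eq_self_iff.2 hy)
  · simp only [hx, hy, dite_false, Sum.inr.injEq, Subtype.mk.injEq]
    exact (sameCycle_iff_cycleOf_eq_of_mem_support (mem_support.2 hx) (mem_support.2 hy)).symm

theorem fixedPointOrCycleOf_surjective : Function.Surjective π.fixedPointOrCycleOf := by
  rintro (⟨x, hx⟩ | ⟨c, hc⟩)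
  · exact ⟨x, dif_pos hx⟩
  · obtain ⟨x, hxc⟩ := (mem_cycleFactorsFinset_iff.1 hc).1.nonempty_support
    have hx : π x ≠ x := mem_support.1 (mem_cycleFactorsFinset_support_le hc hxc)
    refine ⟨x, ?_⟩
    simp only [fixedPointOrCycleOf, hx, dite_false, (cycle_is_cycleOf hxc hc).symm]

theorem nat_card_quotient_sameCycle :
    Nat.card (Quotient (SameCycle.setoid π)) = Multiset.card π.partition.parts := by
  have hbij : Function.Bijective (Quotient.lift (s := SameCycle.setoid π)
      π.fixedPointOrCycleOf fun _ _ => π.fixedPointOrCycleOf_eq_iff.2) :=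
    ⟨fun p q => Quotient.inductionOn₂ p q fun _ _ h =>
        Quotient.sound (π.fixedPointOrCycleOf_eq_iff.1 h),
      fun c => let ⟨x, hx⟩ := π.fixedPointOrCycleOf_surjective c; ⟨⟦x⟧, hx⟩⟩
  rw [Nat.card_eq_of_bijective _ hbij, Nat.card_sum, Nat.card_eq_fintype_card, card_fixedPoints,
    sum_cycleType, parts_partition, Multiset.card_add, Multiset.card_replicate, cycleType_def,
    Multiset.card_map, Finset.card_val, Nat.card_eq_fintype_card, Fintype.card_coe, add_comm]

theorem nat_card_comp_eq_self (β : Type*) :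
    Nat.card {h : α → β // h ∘ π = h} = Nat.card β ^ Multiset.card π.partition.parts := by
  rw [Nat.card_congr (compEqSelfEquiv π β), Nat.card_fun, nat_card_quotient_sameCycle]

end Equiv.Perm

theorem cycleCount_eq_card_parts {T : ℕ} (π : Equiv.Perm (Fin T)) :
    cycleCount π = Multiset.card π.partition.parts := by
  have hcard : Multiset.card π.cycleType ≤ π.cycleType.sum := by
    simpa using Multiset.card_nsmul_le_sum fun _ h =>
      (π.two_le_of_mem_cycleType h).trans' one_le_two
  have hsum := π.sum_cycleType_le
  rw [cycleCount, Equiv.Perm.parts_partition, Multiset.card_add, Multiset.card_replicate,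
    ← Equiv.Perm.sum_cycleType]
  simp only [Fintype.card_fin] at hsum ⊢
  omega

theorem stmt_17_general (d s T : ℕ)
    (π : Equiv.Perm (Fin T))
    (Q : Matrix (Fin T → Fin d) (Fin T → Fin d) ℂ)
    (hQ : ∀ f g, Q f g = ∑ h : Fin T → Fin s,
      (if (fun l => (f l, h l) : Fin T → Fin d × Fin s)
          = (fun l => (g l, h l) : Fin T → Fin d × Fin s) ∘ ⇑π⁻¹ then (1 : ℂ) else 0)) :
    Q = ((s : ℂ) ^ cycleCount π) • permOp d T π := by
  classical
  ext f g
  have hsplit (h : Fin T → Fin s) :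
      ((fun l => (f l, h l)) = (fun l => (g l, h l)) ∘ ⇑π⁻¹) ↔ f = g ∘ ⇑π⁻¹ ∧ h ∘ π = h := by
    rw [Equiv.Perm.inv_def, ← Equiv.eq_comp_symm π h h]
    simp only [funext_iff, Function.comp_apply, Prod.mk.injEq, forall_and]
  have hcount :
      ∑ h : Fin T → Fin s, (if h ∘ π = h then (1 : ℂ) else 0) = (s : ℂ) ^ cycleCount π := by
    rw [Finset.sum_boole, ← Fintype.card_subtype, ← Nat.card_eq_fintype_card,
      Equiv.Perm.nat_card_comp_eq_self, cycleCount_eq_card_parts, Nat.card_eq_fintype_card,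
      Fintype.card_fin]
    exact Nat.cast_pow s _
  simp only [hQ, hsplit, ite_and, Finset.sum_ite_irrel, Finset.sum_const_zero, hcount,
    Matrix.smul_apply, permOp, smul_eq_mul, mul_ite, mul_one, mul_zero]

/-- Tracing out all `s`-dimensional factors of the permutation operator on
`(ℂ^{d·s})^{⊗T}` yields `s^{c(π)}` times the permutation operator on `(ℂ^d)^{⊗T}`,
where `c(π)` is the number of cycles of `π` counting fixed points. -/
theorem stmt_17 (d s T : ℕ) (hd : 1 ≤ d) (hs : 1 ≤ s) (hT : 1 ≤ T)
    (π : Equiv.Perm (Fin T))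
    (Q : Matrix (Fin T → Fin d) (Fin T → Fin d) ℂ)
    (hQ : ∀ f g, Q f g = ∑ h : Fin T → Fin s,
      (if (fun l => (f l, h l) : Fin T → Fin d × Fin s)
          = (fun l => (g l, h l) : Fin T → Fin d × Fin s) ∘ ⇑π⁻¹ then (1 : ℂ) else 0)) :
    Q = ((s : ℂ) ^ cycleCount π) • permOp d T π :=
  stmt_17_general d s T π Q hQ
end

section
/- Let d, s, T ≥ 1 be natural numbers, let μ be the Haar probability measure on the unitary group of (Fin d × Fin s)-indexed complex matrices, and for a unitary U let ψ_U be the random induced state with entries ψ_U(i, j) = Σ_{k : Fin s} (U e₀)(i, k)·conj((U e₀)(j, k)). Then ∫ (ψ_U)^{⊗T} dμ(U) = (∏_{i=0}^{T−1} (d·s + i))⁻¹ · Σ_{π ∈ Perm(Fin T)} s^{c(π)} • P_π, where (ψ)^{⊗T} is the matrix indexed by f, g : Fin T → Fin d with entries ∏_l ψ(f l)(g l), and the integral is the entrywise (Bochner) integral of matrix-valued functions. -/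
open MeasureTheory Matrix Finset

/-- Borel measurable-space structure on the unitary group (as a subspace of matrices). -/
noncomputable instance unitaryGroupMeasurableSpace (n : Type*) [Fintype n] [DecidableEq n] :
    MeasurableSpace (Matrix.unitaryGroup n ℂ) := borel _

instance unitaryGroupBorelSpace (n : Type*) [Fintype n] [DecidableEq n] :
    BorelSpace (Matrix.unitaryGroup n ℂ) := ⟨rfl⟩

/-!
The first column `w` of a Haar unitary on `ℂ^N` is a random unit vector whose law is invariant
under every unitary. Invariance under diagonal phases kills the moments
`E[∏ w_r ^ m_r * conj (w_r) ^ m'_r]` with `m ≠ m'`. Invariance under a real rotation of two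
coordinates, read as a polynomial identity in `t = c² / s²`, shows that `E|w^m|² / ∏ m_r!` only
depends on `|m| = ∑ m_r`; averaging `∑_r |w_r|² = 1` against `|w^m|²` then gives
`E|w^m|² = ∏ m_r! / (N (N + 1) ⋯ (N + |m| - 1))`. Counting the permutations `π` with `a ∘ π = b`
fibre by fibre turns this into
`E[∏_l w_{a l} * conj (w_{b l})] = #{π | a ∘ π = b} / (N (N + 1) ⋯ (N + T - 1))`.
For `N = d s` and `a = (f, K)`, `b = (g, K)`, summing over the environment indices `K` counts each
`π` with `f ∘ π = g` once for every `K` that is constant on the cycles of `π`, that is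
`s ^ c(π)` times.
-/

open ComplexConjugate
open scoped Nat

namespace Equiv.Perm

variable {α β κ : Type*}

section Fibres

variable [Fintype α] [DecidableEq κ]

lemma card_fiber_comp (a : α → κ) (π : Perm α) (r : κ) :
    Fintype.card {x // a (π x) = r} = Fintype.card {x // a x = r} :=
  Fintype.card_congr (π.subtypeEquiv fun _ => Iff.rfl)

lemma exists_comp_eq_of_card_fiber_eq {a b : α → κ}
    (h : ∀ r, Fintype.card {x // a x = r} = Fintype.card {x // b x = r}) :
    ∃ σ : Perm α, a ∘ σ = b := by
  let e (r : κ) : {x // b x = r} ≃ {x // a x = r} := Fintype.equivOfCardEq (h r).symm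
  refine ⟨(sigmaFiberEquiv b).symm.trans ((Equiv.sigmaCongrRight e).trans (sigmaFiberEquiv a)), ?_⟩
  ext x
  exact (e (b x) ⟨x, rfl⟩).2

variable [DecidableEq α] [Fintype κ]

theorem card_comp_eq (a b : α → κ) :
    #{π : Perm α | a ∘ π = b} =
      if (fun r => #{x | a x = r}) = (fun r => #{x | b x = r}) then ∏ r, (#{x | a x = r})!
      else 0 := by
  simp only [← Fintype.card_subtype]
  split_ifs with h
  · obtain ⟨σ, hσ⟩ := exists_comp_eq_of_card_fiber_eq fun r => congrFun h r
    rw [← DomMulAct.stabilizer_card a]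
    refine Fintype.card_congr (subtypeEquiv (Equiv.mulRight σ⁻¹) fun π => ?_)
    rw [← hσ, Equiv.coe_mulRight, coe_mul, ← Function.comp_assoc, inv_def, Equiv.comp_symm_eq]
  · rw [Fintype.card_eq_zero_iff]
    refine ⟨fun ⟨π, hπ⟩ => h (funext fun r => ?_)⟩
    rw [← hπ, ← card_fiber_comp a π r]
    rfl

end Fibres

section Cycles

section Finite

variable [Finite α]

lemma apply_eq_of_comp_eq_self {σ : Perm α} {K : α → β} (hK : K ∘ σ = K) {x y : α}
    (h : σ.SameCycle x y) : K x = K y := by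
  obtain ⟨i, -, rfl⟩ := h.exists_pow_eq'
  rw [coe_pow, ← Function.comp_apply (f := K), Function.iterate_invariant hK]

def invariantFunEquiv (σ : Perm α) :
    {K : α → β // K ∘ σ = K} ≃ (Quotient (SameCycle.setoid σ) → β) where
  toFun K := Quotient.lift K.1 fun _ _ => apply_eq_of_comp_eq_self K.2
  invFun h := ⟨h ∘ Quotient.mk _,
    funext fun x => congrArg h (Quotient.sound (SameCycle.refl σ x).apply_left)⟩
  left_inv _ := rfl
  right_inv _ := funext fun q => Quotient.inductionOn q fun _ => rfl

end Finite

variable [Fintype α] [DecidableEq α]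

noncomputable def quotientSameCycleEquiv (σ : Perm α) :
    Quotient (SameCycle.setoid σ) ≃ Function.fixedPoints σ ⊕ σ.cycleFactorsFinset := by
  refine .ofBijective (Quotient.lift (fun x => if hx : σ x = x then .inl ⟨x, hx⟩
    else .inr ⟨σ.cycleOf x, cycleOf_mem_cycleFactorsFinset_iff.2 (mem_support.2 hx)⟩) ?_) ⟨?_, ?_⟩
  · intro x y (hxy : σ.SameCycle x y)
    by_cases hx : σ x = x
    · obtain rfl := hxy.eq_of_left hx
      rfl
    · have hy : σ y ≠ y := fun hy => hx (hxy.apply_eq_self_iff.2 hy)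
      simp only [dif_neg hx, dif_neg hy, hxy.cycleOf_eq]
  · rintro ⟨x⟩ ⟨y⟩ hxy
    refine Quotient.sound (show σ.SameCycle x y from ?_)
    by_cases hx : σ x = x <;> by_cases hy : σ y = y <;>
      simp only [dif_pos, dif_neg, hx, hy, reduceCtorEq, Sum.inl.injEq, Sum.inr.injEq,
        Subtype.mk.injEq, not_false_eq_true] at hxy
    · obtain rfl : x = y := congrArg Subtype.val hxy
      exact .refl σ x
    · have hmem : y ∈ (σ.cycleOf x).support :=
        hxy ▸ mem_support_cycleOf_iff.2 ⟨.refl σ y, mem_support.2 hy⟩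
      exact (mem_support_cycleOf_iff.1 hmem).1
  · rintro (⟨x, hx⟩ | ⟨c, hc⟩)
    · exact ⟨⟦x⟧, by simp [show σ x = x from hx]⟩
    · obtain ⟨x, hx⟩ := (mem_cycleFactorsFinset_iff.1 hc).1.nonempty_support
      have hσx : σ x ≠ x := mem_support.1 (mem_cycleFactorsFinset_support_le hc hx)
      exact ⟨⟦x⟧, by simp [hσx, (cycle_is_cycleOf hx hc).symm]⟩

theorem card_comp_eq_self [Fintype β] [DecidableEq β] (σ : Perm α) :
    #{K : α → β | K ∘ σ = K} =
      Fintype.card β ^ (Fintype.card α - σ.cycleType.sum + Multiset.card σ.cycleType) := by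
  rw [← Fintype.card_subtype, ← Nat.card_eq_fintype_card, Nat.card_congr (invariantFunEquiv σ),
    Nat.card_fun, Nat.card_congr (quotientSameCycleEquiv σ), Nat.card_sum,
    Nat.card_eq_fintype_card (α := Function.fixedPoints σ), card_fixedPoints, Nat.card_eq_finsetCard,
    cycleType_def, Multiset.card_map, Nat.card_eq_fintype_card]
  rfl

lemma card_cycleType_le_sum (σ : Perm α) : Multiset.card σ.cycleType ≤ σ.cycleType.sum := by
  simpa using Multiset.card_nsmul_le_sum (s := σ.cycleType) (a := 1) fun x hx =>
    (two_le_of_mem_cycleType hx).trans' one_le_two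

end Cycles

end Equiv.Perm

lemma card_comp_eq_self_eq_pow_cycleCount {T : ℕ} (π : Equiv.Perm (Fin T)) (s : ℕ) :
    #{K : Fin T → Fin s | K ∘ π = K} = s ^ cycleCount π := by
  rw [Equiv.Perm.card_comp_eq_self, Fintype.card_fin, Fintype.card_fin, cycleCount]
  have hcard := π.card_cycleType_le_sum
  have hsum : π.cycleType.sum ≤ T := by simpa using π.sum_cycleType_le
  congr 1
  omega

lemma sum_card_comp_prod_eq {d s T : ℕ} (f g : Fin T → Fin d) :
    ∑ K : Fin T → Fin s,
        (#{π : Equiv.Perm (Fin T) | (fun l => (f l, K l)) ∘ π = fun l => (g l, K l)} : ℂ) =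
      ∑ π : Equiv.Perm (Fin T), (s : ℂ) ^ cycleCount π * permOp d T π f g := by
  simp only [natCast_card_filter]
  rw [sum_comm]
  refine sum_congr rfl fun π _ => ?_
  have hiff (K : Fin T → Fin s) : (fun l => (f l, K l)) ∘ π = (fun l => (g l, K l)) ↔
      f ∘ π = g ∧ K ∘ π = K := by
    simp only [funext_iff, Function.comp_apply, Prod.ext_iff, forall_and]
  simp only [hiff, ite_and, permOp, Equiv.Perm.inv_def, Equiv.eq_comp_symm]
  split_ifs
  · rw [mul_one, ← natCast_card_filter, card_comp_eq_self_eq_pow_cycleCount, Nat.cast_pow]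
  · simp

open Polynomial in
lemma eq_mul_choose_of_sum_mul_pow_eq {M : ℕ} {a : ℕ → ℂ} {b : ℂ}
    (h : ∀ t : ℝ, 0 < t → ∑ i ∈ range (M + 1), a i * (t : ℂ) ^ i = b * ((t : ℂ) + 1) ^ M)
    {i : ℕ} (hi : i ≤ M) : a i = b * M.choose i := by
  have hPQ : ∑ i ∈ range (M + 1), C (a i) * X ^ i = C b * (X + 1) ^ M := by
    refine eq_of_infinite_eval_eq _ _ <| ((Set.Ioi_infinite 0).image
      Complex.ofReal_injective.injOn).mono ?_
    rintro _ ⟨t, ht, rfl⟩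
    simpa [eval_finsetSum] using h t ht
  have := congrArg (coeff · i) hPQ
  simp only [finsetSum_coeff, coeff_C_mul, coeff_X_pow, mul_ite, mul_one, mul_zero,
    sum_ite_eq, coeff_X_add_one_pow] at this
  rwa [if_pos (mem_range.2 (Nat.lt_succ_of_le hi))] at this

lemma exists_conj_mul_self_eq_one_and_pow_mul_conj_pow_eq_neg_one {a b : ℕ} (hab : a ≠ b) :
    ∃ z : ℂ, conj z * z = 1 ∧ z ^ a * conj z ^ b = -1 := by
  have hne : ((a : ℂ) - b) ≠ 0 := sub_ne_zero.2 (by exact_mod_cast hab)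
  set θ : ℝ := Real.pi / ((a : ℝ) - b)
  refine ⟨Complex.exp (θ * Complex.I), ?_, ?_⟩
  · rw [← Complex.exp_conj, ← Complex.exp_add]
    simp
  · rw [← Complex.exp_conj, ← Complex.exp_nat_mul, ← Complex.exp_nat_mul, ← Complex.exp_add]
    convert Complex.exp_pi_mul_I using 2
    simp only [map_mul, Complex.conj_ofReal, Complex.conj_I, θ]
    push_cast
    field_simp
    ring

namespace HaarColumn

section PowProd

variable {ι : Type*} [Fintype ι]

def powProd (m : ι → ℕ) (w : ι → ℂ) : ℂ := ∏ r, w r ^ m r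

def mixedMonomial (m m' : ι → ℕ) (w : ι → ℂ) : ℂ := powProd m w * conj (powProd m' w)

lemma powProd_add (m m' : ι → ℕ) (w : ι → ℂ) :
    powProd (m + m') w = powProd m w * powProd m' w := by
  simp only [powProd, Pi.add_apply, pow_add, prod_mul_distrib]

lemma powProd_mul (m : ι → ℕ) (α w : ι → ℂ) :
    powProd m (α * w) = powProd m α * powProd m w := by
  simp only [powProd, Pi.mul_apply, mul_pow, prod_mul_distrib]

lemma mixedMonomial_mul (m m' : ι → ℕ) (α w : ι → ℂ) :
    mixedMonomial m m' (α * w) = mixedMonomial m m' α * mixedMonomial m m' w := by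
  simp only [mixedMonomial, powProd_mul, map_mul]
  ring

lemma powProd_congr {m : ι → ℕ} {w w' : ι → ℂ} (h : ∀ r, m r ≠ 0 → w r = w' r) :
    powProd m w = powProd m w' :=
  prod_congr rfl fun r _ => by
    rcases eq_or_ne (m r) 0 with hr | hr
    · simp [hr]
    · rw [h r hr]

lemma norm_powProd_le_one (m : ι → ℕ) {w : ι → ℂ} (hw : ∀ r, ‖w r‖ ≤ 1) :
    ‖powProd m w‖ ≤ 1 := by
  rw [powProd, norm_prod]
  exact prod_le_one (fun _ _ => norm_nonneg _) fun r _ => by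
    rw [norm_pow]; exact pow_le_one₀ (norm_nonneg _) (hw r)

variable [DecidableEq ι]

lemma powProd_single (p : ι) (k : ℕ) (w : ι → ℂ) : powProd (Pi.single p k) w = w p ^ k := by
  rw [powProd, Fintype.prod_eq_single p fun r hr => by simp [hr]]
  simp

lemma powProd_mulSingle (m : ι → ℕ) (q : ι) (z : ℂ) :
    powProd m (Pi.mulSingle q z) = z ^ m q := by
  rw [powProd, Fintype.prod_eq_single q fun r hr => by simp [hr]]
  simp

lemma prod_comp_eq_powProd {T : ℕ} (w : ι → ℂ) (a : Fin T → ι) :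
    ∏ l, w (a l) = powProd (fun r => #{l | a l = r}) w := by
  rw [Finset.prod_comp, powProd]
  refine prod_subset (subset_univ _) fun r _ hr => ?_
  have : #{l | a l = r} = 0 :=
    card_eq_zero.2 <| filter_eq_empty_iff.2 fun l _ hl => hr (hl ▸ mem_image_of_mem a (mem_univ l))
  rw [this, pow_zero]

lemma prod_mul_conj_eq_mixedMonomial {T : ℕ} (a b : Fin T → ι) (w : ι → ℂ) :
    ∏ l, w (a l) * conj (w (b l)) =
      mixedMonomial (fun r => #{l | a l = r}) (fun r => #{l | b l = r}) w := by
  rw [prod_mul_distrib, ← map_prod, prod_comp_eq_powProd, prod_comp_eq_powProd, mixedMonomial]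

end PowProd

section Exponents

variable {ι : Type*} [DecidableEq ι] {p q : ι}

def splitAt (n : ι → ℕ) (p q : ι) (i : ℕ) : ι → ℕ :=
  Function.update (Function.update n p i) q (n p - i)

lemma splitAt_apply_left (hpq : p ≠ q) (n : ι → ℕ) (i : ℕ) : splitAt n p q i p = i := by
  simp [splitAt, hpq]

lemma splitAt_eq_add (hpq : p ≠ q) {n : ι → ℕ} (hq : n q = 0) (i : ℕ) :
    splitAt n p q i = Function.update n p 0 + Pi.single p i + Pi.single q (n p - i) := by
  ext r
  rcases eq_or_ne r p with rfl | hrp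
  · simp [splitAt, hpq]
  rcases eq_or_ne r q with rfl | hrq
  · simp [splitAt, hq, hrp]
  · simp [splitAt, hrp, hrq]

lemma splitAt_self {n : ι → ℕ} (hq : n q = 0) : splitAt n p q (n p) = n := by
  ext r
  rcases eq_or_ne r q with rfl | hrq
  · simp [splitAt, hq]
  · rcases eq_or_ne r p with rfl | hrp <;> simp [splitAt, *]

variable [Fintype ι]

lemma sum_splitAt (hpq : p ≠ q) {n : ι → ℕ} (hq : n q = 0) {i : ℕ} (hi : i ≤ n p) :
    ∑ r, splitAt n p q i r = ∑ r, n r := by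
  conv_rhs => rw [← splitAt_self (p := p) hq]
  simp only [splitAt_eq_add hpq hq, Pi.add_apply, sum_add_distrib, sum_pi_single', mem_univ,
    if_true, Nat.sub_self]
  omega

lemma prod_factorial_add_single {m : ι → ℕ} (hm : m p = 0) (k : ℕ) :
    ∏ r, ((m + Pi.single p k : ι → ℕ) r)! = k ! * ∏ r, (m r)! := by
  have h (r : ι) : ((m + Pi.single p k : ι → ℕ) r)! = ((Pi.single p k : ι → ℕ) r)! * (m r)! := by
    rcases eq_or_ne r p with rfl | hr <;> simp [*]
  rw [prod_congr rfl fun r _ => h r, prod_mul_distrib,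
    Fintype.prod_eq_single p fun r hr => by simp [hr]]
  simp

lemma prod_factorial_splitAt_mul_choose (hpq : p ≠ q) {n : ι → ℕ} (hq : n q = 0) {i : ℕ}
    (hi : i ≤ n p) : (∏ r, (splitAt n p q i r)!) * (n p).choose i = ∏ r, (n r)! := by
  conv_rhs => rw [← splitAt_self (p := p) hq]
  have hp : Function.update n p 0 p = 0 := by simp
  have hq' (k : ℕ) : (Function.update n p 0 + Pi.single p k : ι → ℕ) q = 0 := by
    simp [hpq.symm, hq]
  simp only [splitAt_eq_add hpq hq, prod_factorial_add_single (hq' _),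
    prod_factorial_add_single hp, Nat.sub_self, Nat.factorial_zero, one_mul]
  rw [← Nat.choose_mul_factorial_mul_factorial hi]
  ring

lemma prod_factorial_add_single_one (m : ι → ℕ) (p : ι) :
    ∏ r, ((m + Pi.single p 1 : ι → ℕ) r)! = (m p + 1) * ∏ r, (m r)! := by
  have hrest : ∏ r ∈ univ.erase p, ((m + Pi.single p 1 : ι → ℕ) r)! =
      ∏ r ∈ univ.erase p, (m r)! :=
    prod_congr rfl fun r hr => by simp [(mem_erase.1 hr).1]
  rw [← mul_prod_erase univ _ (mem_univ p), hrest,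
    ← mul_prod_erase univ (fun r => (m r)!) (mem_univ p)]
  simp [Nat.factorial_succ, mul_assoc]

end Exponents

section UnitaryMatrices

variable {ι : Type*} [DecidableEq ι]

def planeRotation (p q : ι) (c s : ℝ) : Matrix ι ι ℂ :=
  of fun r => if r = p then (c : ℂ) • Pi.single p 1 + (s : ℂ) • Pi.single q 1
    else if r = q then (-s : ℂ) • Pi.single p 1 + (c : ℂ) • Pi.single q 1 else Pi.single r 1

lemma star_planeRotation {p q : ι} (hpq : p ≠ q) (c s : ℝ) :
    star (planeRotation p q c s) = planeRotation p q c (-s) := by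
  ext r t
  simp only [star_apply, planeRotation, of_apply]
  by_cases hrp : r = p <;> by_cases hrq : r = q <;> by_cases htp : t = p <;>
    by_cases htq : t = q <;> simp_all [Pi.single_apply, eq_comm]

variable [Fintype ι]

lemma planeRotation_mulVec (p q : ι) (c s : ℝ) (x : ι → ℂ) :
    planeRotation p q c s *ᵥ x = fun r =>
      if r = p then c * x p + s * x q else if r = q then -s * x p + c * x q else x r := by
  ext r
  simp only [mulVec, planeRotation, of_apply]
  split_ifs <;> simp [dotProduct, add_mul, sum_add_distrib, Pi.single_apply]

lemma mem_unitaryGroup_of_star_mulVec_mulVec {A : Matrix ι ι ℂ}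
    (h : ∀ x, star A *ᵥ (A *ᵥ x) = x) : A ∈ unitaryGroup ι ℂ :=
  mem_unitaryGroup_iff'.2 <| ext_of_mulVec_single fun i => by
    rw [← mulVec_mulVec, h, one_mulVec]

lemma diagonal_mem_unitaryGroup {α : ι → ℂ} (hα : ∀ r, conj (α r) * α r = 1) :
    diagonal α ∈ unitaryGroup ι ℂ := by
  refine mem_unitaryGroup_of_star_mulVec_mulVec fun x => ?_
  ext r
  simp [star_eq_conjTranspose, diagonal_conjTranspose, mulVec_diagonal, ← mul_assoc, hα]

lemma planeRotation_mem_unitaryGroup {p q : ι} (hpq : p ≠ q) {c s : ℝ} (hcs : c ^ 2 + s ^ 2 = 1) :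
    planeRotation p q c s ∈ unitaryGroup ι ℂ := by
  have hcs' : (c : ℂ) ^ 2 + (s : ℂ) ^ 2 = 1 := by exact_mod_cast hcs
  refine mem_unitaryGroup_of_star_mulVec_mulVec fun x => ?_
  ext r
  rw [star_planeRotation hpq, planeRotation_mulVec, planeRotation_mulVec]
  by_cases hrp : r = p
  · subst hrp
    simp only [↓reduceIte, Complex.ofReal_neg, hpq.symm, neg_mul]
    linear_combination x r * hcs'
  · by_cases hrq : r = q
    · subst hrq
      simp only [hrp, ↓reduceIte, Complex.ofReal_neg, neg_neg, neg_mul]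
      linear_combination x r * hcs'
    · simp [hrp, hrq]

lemma powProd_planeRotation_mulVec {p q : ι} (hpq : p ≠ q) {n : ι → ℕ} (hq : n q = 0) (c s : ℝ)
    (w : ι → ℂ) :
    powProd n (planeRotation p q c s *ᵥ w) = ∑ i ∈ range (n p + 1),
      (((n p).choose i * c ^ i * s ^ (n p - i) : ℝ) : ℂ) * powProd (splitAt n p q i) w := by
  set n₀ := Function.update n p 0
  have hn : n = n₀ + Pi.single p (n p) := by
    have := (splitAt_self (p := p) hq).symm
    rwa [splitAt_eq_add hpq hq, Nat.sub_self, Pi.single_zero, add_zero] at this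
  have hfix : powProd n₀ (planeRotation p q c s *ᵥ w) = powProd n₀ w := by
    refine powProd_congr fun r hr => ?_
    have hrp : r ≠ p := by rintro rfl; simp [n₀] at hr
    have hrq : r ≠ q := by rintro rfl; simp [n₀, hpq.symm, hq] at hr
    simp [planeRotation_mulVec, hrp, hrq]
  conv_lhs => rw [hn]
  rw [powProd_add, powProd_single, hfix, planeRotation_mulVec]
  dsimp only
  rw [if_pos rfl, add_pow, mul_sum]
  refine sum_congr rfl fun i _ => ?_
  rw [splitAt_eq_add hpq hq, powProd_add, powProd_add, powProd_single, powProd_single]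
  push_cast
  ring

end UnitaryMatrices

variable {ι : Type*} [Fintype ι] [DecidableEq ι]

def column (p₀ : ι) (U : unitaryGroup ι ℂ) : ι → ℂ := fun r => (U : Matrix ι ι ℂ) r p₀

lemma column_mul (p₀ : ι) (W U : unitaryGroup ι ℂ) :
    column p₀ (W * U) = (W : Matrix ι ι ℂ) *ᵥ column p₀ U := by
  ext r
  simp [column, mulVec, dotProduct, mul_apply]

lemma sum_column_mul_conj (p₀ : ι) (U : unitaryGroup ι ℂ) :
    ∑ r, column p₀ U r * conj (column p₀ U r) = 1 := by
  have h := congrFun (congrFun (Unitary.coe_star_mul_self U) p₀) p₀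
  simp only [mul_apply, star_apply, one_apply_eq] at h
  simpa [column, mul_comm] using h

lemma norm_column_le_one (p₀ : ι) (U : unitaryGroup ι ℂ) (r : ι) : ‖column p₀ U r‖ ≤ 1 := by
  have h : ∑ r, ‖column p₀ U r‖ ^ 2 = 1 := by
    have := sum_column_mul_conj p₀ U
    simp only [Complex.mul_conj'] at this
    exact_mod_cast this
  have : ‖column p₀ U r‖ ^ 2 ≤ 1 :=
    h ▸ single_le_sum (fun r _ => sq_nonneg ‖column p₀ U r‖) (mem_univ r)
  nlinarith [norm_nonneg (column p₀ U r)]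

lemma continuous_column (p₀ : ι) : Continuous (column p₀ : unitaryGroup ι ℂ → ι → ℂ) :=
  continuous_pi fun r => continuous_subtype_val.matrix_elem r p₀

variable (μ : Measure (unitaryGroup ι ℂ)) (p₀ : ι)

noncomputable def columnMoment (m m' : ι → ℕ) : ℂ :=
  ∫ U, mixedMonomial m m' (column p₀ U) ∂μ

noncomputable def normalizedMoment (m : ι → ℕ) : ℂ :=
  columnMoment μ p₀ m m / ∏ r, ((m r)! : ℂ)

lemma columnMoment_eq_normalizedMoment_mul (m : ι → ℕ) :
    columnMoment μ p₀ m m = normalizedMoment μ p₀ m * ∏ r, ((m r)! : ℂ) :=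
  (div_mul_cancel₀ _ (prod_ne_zero_iff.2 fun _ _ =>
    Nat.cast_ne_zero.2 (Nat.factorial_ne_zero _))).symm

section Invariant

variable [μ.IsMulLeftInvariant]

lemma integral_comp_mulVec_column (F : (ι → ℂ) → ℂ) (W : unitaryGroup ι ℂ) :
    ∫ U, F ((W : Matrix ι ι ℂ) *ᵥ column p₀ U) ∂μ = ∫ U, F (column p₀ U) ∂μ := by
  simp_rw [← column_mul]
  exact integral_mul_left_eq_self (fun U => F (column p₀ U)) W

lemma columnMoment_eq_mul_of_phase (m m' : ι → ℕ) {α : ι → ℂ}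
    (hα : ∀ r, conj (α r) * α r = 1) :
    columnMoment μ p₀ m m' = mixedMonomial m m' α * columnMoment μ p₀ m m' := by
  rw [columnMoment, ← integral_const_mul,
    ← integral_comp_mulVec_column μ p₀ _ ⟨_, diagonal_mem_unitaryGroup hα⟩]
  congr 1 with U
  rw [← mixedMonomial_mul]
  congr 1 with r
  exact mulVec_diagonal _ _ r

lemma columnMoment_eq_zero_of_ne {m m' : ι → ℕ} (h : m ≠ m') : columnMoment μ p₀ m m' = 0 := by
  obtain ⟨q, hq⟩ := Function.ne_iff.1 h
  obtain ⟨z, hz, hzq⟩ := exists_conj_mul_self_eq_one_and_pow_mul_conj_pow_eq_neg_one hq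
  have hα (r : ι) : conj ((Pi.mulSingle q z : ι → ℂ) r) * (Pi.mulSingle q z : ι → ℂ) r = 1 := by
    rcases eq_or_ne r q with rfl | hr
    · simpa using hz
    · simp [hr]
  have := columnMoment_eq_mul_of_phase μ p₀ m m' hα
  rw [mixedMonomial, powProd_mulSingle, powProd_mulSingle, map_pow, hzq] at this
  linear_combination this / 2

end Invariant

section FiniteMeasure

variable [IsFiniteMeasure μ]

lemma integrable_mixedMonomial_column (m m' : ι → ℕ) :
    Integrable (fun U => mixedMonomial m m' (column p₀ U)) μ := by
  have hcont : Continuous fun U => mixedMonomial m m' (column p₀ U) := by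
    unfold mixedMonomial powProd
    have := continuous_column (ι := ι) p₀
    fun_prop
  refine .of_bound hcont.aestronglyMeasurable 1 (.of_forall fun U => ?_)
  rw [mixedMonomial, norm_mul, RCLike.norm_conj]
  exact mul_le_one₀ (norm_powProd_le_one m (norm_column_le_one p₀ U)) (norm_nonneg _)
    (norm_powProd_le_one m' (norm_column_le_one p₀ U))

lemma integrable_prod_column_mul_conj {T : ℕ} (a b : Fin T → ι) :
    Integrable (fun U => ∏ l, column p₀ U (a l) * conj (column p₀ U (b l))) μ := by
  simp only [prod_mul_conj_eq_mixedMonomial]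
  exact integrable_mixedMonomial_column μ p₀ _ _

lemma sum_columnMoment_add_single_one (m : ι → ℕ) :
    ∑ p, columnMoment μ p₀ (m + Pi.single p 1) (m + Pi.single p 1) = columnMoment μ p₀ m m := by
  have h (p : ι) (w : ι → ℂ) : mixedMonomial (m + Pi.single p 1) (m + Pi.single p 1) w =
      w p * conj (w p) * mixedMonomial m m w := by
    simp only [mixedMonomial, powProd_add, powProd_single, map_mul, pow_one]
    ring
  simp only [columnMoment]
  rw [← integral_finsetSum _ fun p _ => integrable_mixedMonomial_column μ p₀ _ _]
  congr 1 with U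
  simp only [h, ← sum_mul, sum_column_mul_conj, one_mul]

variable [μ.IsMulLeftInvariant] {p q : ι}

lemma columnMoment_eq_sum_sq (hpq : p ≠ q) {n : ι → ℕ} (hq : n q = 0) {c s : ℝ}
    (hcs : c ^ 2 + s ^ 2 = 1) :
    columnMoment μ p₀ n n = ∑ i ∈ range (n p + 1),
      ((((n p).choose i * c ^ i * s ^ (n p - i)) ^ 2 : ℝ) : ℂ) *
        columnMoment μ p₀ (splitAt n p q i) (splitAt n p q i) := by
  set a : ℕ → ℂ := fun i => (((n p).choose i * c ^ i * s ^ (n p - i) : ℝ) : ℂ)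
  have hexp (w : ι → ℂ) : mixedMonomial n n (planeRotation p q c s *ᵥ w) =
      ∑ i ∈ range (n p + 1), ∑ j ∈ range (n p + 1),
        a i * a j * mixedMonomial (splitAt n p q i) (splitAt n p q j) w := by
    simp only [mixedMonomial, powProd_planeRotation_mulVec hpq hq, map_sum, map_mul,
      Complex.conj_ofReal, sum_mul_sum]
    exact sum_congr rfl fun i _ => sum_congr rfl fun j _ => by ring
  rw [columnMoment, ← integral_comp_mulVec_column μ p₀ _
    ⟨_, planeRotation_mem_unitaryGroup hpq hcs⟩]
  simp only [hexp]
  rw [integral_finsetSum _ fun i _ => integrable_finsetSum _ fun j _ =>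
    (integrable_mixedMonomial_column μ p₀ _ _).const_mul _]
  refine sum_congr rfl fun i hi => ?_
  rw [integral_finsetSum _ fun j _ => (integrable_mixedMonomial_column μ p₀ _ _).const_mul _,
    sum_eq_single_of_mem i hi fun j _ hji => ?_]
  · rw [integral_const_mul]
    change a i * a i * columnMoment μ p₀ _ _ = _
    push_cast [a]
    ring
  · rw [integral_const_mul]
    refine mul_eq_zero_of_right _ (columnMoment_eq_zero_of_ne μ p₀ fun h => hji ?_)
    simpa [splitAt_apply_left hpq] using (congrFun h p).symm

lemma choose_mul_columnMoment_splitAt (hpq : p ≠ q) {n : ι → ℕ} (hq : n q = 0) {i : ℕ}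
    (hi : i ≤ n p) :
    ((n p).choose i : ℂ) * columnMoment μ p₀ (splitAt n p q i) (splitAt n p q i) =
      columnMoment μ p₀ n n := by
  set M := n p
  have hpoly (t : ℝ) (ht : 0 < t) : ∑ j ∈ range (M + 1),
      (M.choose j : ℂ) ^ 2 * columnMoment μ p₀ (splitAt n p q j) (splitAt n p q j) * (t : ℂ) ^ j =
        columnMoment μ p₀ n n * ((t : ℂ) + 1) ^ M := by
    set c := √(t / (t + 1))
    set s := √(1 / (t + 1))
    have hc : c ^ 2 * (t + 1) = t := by
      rw [Real.sq_sqrt (by positivity)]; field_simp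
    have hs : s ^ 2 * (t + 1) = 1 := by
      rw [Real.sq_sqrt (by positivity)]; field_simp
    have hcs : c ^ 2 + s ^ 2 = 1 := by
      have : (c ^ 2 + s ^ 2) * (t + 1) = 1 * (t + 1) := by linear_combination hc + hs
      exact mul_right_cancel₀ (by positivity) this
    rw [columnMoment_eq_sum_sq μ p₀ hpq hq hcs, sum_mul]
    refine sum_congr rfl fun j hj => ?_
    have hjM : j ≤ M := Nat.lt_succ_iff.1 (mem_range.1 hj)
    have hreal : (M.choose j * c ^ j * s ^ (M - j)) ^ 2 * (t + 1) ^ M = M.choose j ^ 2 * t ^ j := by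
      calc (M.choose j * c ^ j * s ^ (M - j)) ^ 2 * (t + 1) ^ M
          = M.choose j ^ 2 * (c ^ 2 * (t + 1)) ^ j * (s ^ 2 * (t + 1)) ^ (M - j) := by
            rw [← pow_mul_pow_sub _ hjM]; simp only [mul_pow]; ring
        _ = M.choose j ^ 2 * t ^ j := by rw [hc, hs, one_pow, mul_one]
    have hcomplex := congrArg (fun x : ℝ => (x : ℂ)) hreal
    push_cast at hcomplex ⊢
    linear_combination -columnMoment μ p₀ (splitAt n p q j) (splitAt n p q j) * hcomplex
  have hchoose : (M.choose i : ℂ) ≠ 0 := Nat.cast_ne_zero.2 (Nat.choose_pos hi).ne'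
  have := eq_mul_choose_of_sum_mul_pow_eq hpoly hi
  exact mul_left_cancel₀ hchoose (by linear_combination this)

lemma normalizedMoment_splitAt (hpq : p ≠ q) {n : ι → ℕ} (hq : n q = 0) {i : ℕ}
    (hi : i ≤ n p) : normalizedMoment μ p₀ (splitAt n p q i) = normalizedMoment μ p₀ n := by
  have hchoose : ((n p).choose i : ℂ) ≠ 0 := Nat.cast_ne_zero.2 (Nat.choose_pos hi).ne'
  have hfact : (∏ r, ((splitAt n p q i r)! : ℂ)) * (n p).choose i = ∏ r, ((n r)! : ℂ) := by
    exact_mod_cast prod_factorial_splitAt_mul_choose hpq hq hi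
  rw [normalizedMoment, normalizedMoment, ← choose_mul_columnMoment_splitAt μ p₀ hpq hq hi,
    ← hfact, mul_comm _ ((n p).choose i : ℂ), mul_div_mul_left _ _ hchoose]

lemma normalizedMoment_eq_single_sum (m : ι → ℕ) :
    normalizedMoment μ p₀ m = normalizedMoment μ p₀ (Pi.single p₀ (∑ r, m r)) := by
  suffices h : ∀ s : Finset ι, ∀ m : ι → ℕ, (∀ r ∉ s, r ≠ p₀ → m r = 0) →
      normalizedMoment μ p₀ m = normalizedMoment μ p₀ (Pi.single p₀ (∑ r, m r)) from
    h univ m fun r hr => absurd (mem_univ r) hr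
  intro s
  induction s using Finset.induction_on with
  | empty =>
    intro m hm
    have hsingle : m = Pi.single p₀ (m p₀) := by
      ext r; rcases eq_or_ne r p₀ with rfl | hr <;> simp [*]
    rw [hsingle, sum_pi_single']
    simp
  | insert q s hqs ih =>
    intro m hm
    by_cases hqp : q = p₀
    · exact ih m fun r hr hrp => hm r (by simp [hr, show r ≠ q from hqp ▸ hrp]) hrp
    set n := Function.update (Function.update m p₀ (m p₀ + m q)) q 0
    have hpq : p₀ ≠ q := Ne.symm hqp
    have hnq : n q = 0 := by simp [n]
    have hnp : n p₀ = m p₀ + m q := by simp [n, hpq]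
    have hm_eq : splitAt n p₀ q (m p₀) = m := by
      ext r
      rcases eq_or_ne r q with rfl | hrq
      · simp [splitAt, hnp]
      · rcases eq_or_ne r p₀ with rfl | hrp <;> simp [splitAt, n, *]
    have hsum : ∑ r, m r = ∑ r, n r := by
      rw [← hm_eq, sum_splitAt hpq hnq (by omega)]
    rw [← hm_eq, normalizedMoment_splitAt μ p₀ hpq hnq (by omega), hm_eq, hsum]
    refine ih n fun r hr hrp => ?_
    rcases eq_or_ne r q with rfl | hrq
    · exact hnq
    · simp only [n, Function.update_of_ne hrq, Function.update_of_ne hrp]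
      exact hm r (by simp [hr, hrq]) hrp

lemma normalizedMoment_eq_mul_normalizedMoment_single (m : ι → ℕ) :
    normalizedMoment μ p₀ m =
      (Fintype.card ι + ∑ r, m r) * normalizedMoment μ p₀ (Pi.single p₀ (∑ r, m r + 1)) := by
  have hprod : ∏ r, ((m r)! : ℂ) ≠ 0 :=
    prod_ne_zero_iff.2 fun _ _ => Nat.cast_ne_zero.2 (Nat.factorial_ne_zero _)
  have hsum (p : ι) : ∑ r, (m + Pi.single p 1 : ι → ℕ) r = ∑ r, m r + 1 := by
    simp [sum_add_distrib]
  have hfact (p : ι) :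
      ∏ r, (((m + Pi.single p 1 : ι → ℕ) r)! : ℂ) = (m p + 1) * ∏ r, ((m r)! : ℂ) := by
    exact_mod_cast prod_factorial_add_single_one m p
  apply mul_right_cancel₀ hprod
  rw [← columnMoment_eq_normalizedMoment_mul, ← sum_columnMoment_add_single_one]
  simp only [columnMoment_eq_normalizedMoment_mul, normalizedMoment_eq_single_sum μ p₀ (m + _),
    hsum, hfact]
  rw [← mul_sum, ← sum_mul]
  simp only [sum_add_distrib, sum_const, card_univ, nsmul_eq_mul, mul_one]
  push_cast
  ring

variable [IsProbabilityMeasure μ]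

lemma normalizedMoment_single_mul_prod (T : ℕ) :
    normalizedMoment μ p₀ (Pi.single p₀ T) * ∏ i ∈ range T, ((Fintype.card ι : ℂ) + i) = 1 := by
  induction T with
  | zero => simp [normalizedMoment, columnMoment, mixedMonomial, powProd]
  | succ T ih =>
    have := normalizedMoment_eq_mul_normalizedMoment_single μ p₀ (Pi.single p₀ T)
    rw [sum_pi_single'] at this
    simp only [mem_univ, if_true] at this
    rw [prod_range_succ, ← ih, this]
    ring

theorem columnMoment_self_mul_prod (m : ι → ℕ) :
    columnMoment μ p₀ m m * ∏ i ∈ range (∑ r, m r), ((Fintype.card ι : ℂ) + i) =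
      ∏ r, ((m r)! : ℂ) := by
  rw [columnMoment_eq_normalizedMoment_mul, normalizedMoment_eq_single_sum]
  linear_combination (∏ r, ((m r)! : ℂ)) * normalizedMoment_single_mul_prod μ p₀ (∑ r, m r)

theorem integral_prod_column_mul_conj {T : ℕ} (a b : Fin T → ι) :
    (∫ U, ∏ l, column p₀ U (a l) * conj (column p₀ U (b l)) ∂μ) *
        ∏ i ∈ range T, ((Fintype.card ι : ℂ) + i) =
      #{π : Equiv.Perm (Fin T) | a ∘ π = b} := by
  have hT : ∑ r, #{l | a l = r} = T := by
    rw [← card_eq_sum_card_fiberwise fun l _ => mem_univ (a l), card_univ, Fintype.card_fin]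
  simp only [prod_mul_conj_eq_mixedMonomial]
  rw [← columnMoment, Equiv.Perm.card_comp_eq]
  split_ifs with h
  · rw [← h]
    push_cast
    convert columnMoment_self_mul_prod μ p₀ (fun r => #{l | a l = r}) using 3
    rw [hT]
  · rw [columnMoment_eq_zero_of_ne μ p₀ h, zero_mul, Nat.cast_zero]

end FiniteMeasure

end HaarColumn

open HaarColumn in
theorem stmt_18_general (d s T : ℕ) (hd : 0 < d) (hs : 0 < s)
    (μ : Measure (Matrix.unitaryGroup (Fin d × Fin s) ℂ))
    [IsProbabilityMeasure μ] [μ.IsMulLeftInvariant]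
    (e₀ : Fin d × Fin s → ℂ)
    (he₀ : e₀ = fun p => if p = (⟨0, hd⟩, ⟨0, hs⟩) then 1 else 0)
    (ψ : Matrix.unitaryGroup (Fin d × Fin s) ℂ → Matrix (Fin d) (Fin d) ℂ)
    (hψ : ∀ U i j, ψ U i j =
      ∑ k : Fin s,
        ((U : Matrix (Fin d × Fin s) (Fin d × Fin s) ℂ).mulVec e₀ (i, k)) *
          (starRingEnd ℂ) ((U : Matrix (Fin d × Fin s) (Fin d × Fin s) ℂ).mulVec e₀ (j, k))) :
    ∀ f g : Fin T → Fin d,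
      ∫ U, (∏ l : Fin T, ψ U (f l) (g l)) ∂μ
        = (∏ i ∈ Finset.range T, ((d : ℂ) * s + i))⁻¹ *
            ∑ π : Equiv.Perm (Fin T), (s : ℂ) ^ cycleCount π * permOp d T π f g := by
  intro f g
  set p₀ : Fin d × Fin s := (⟨0, hd⟩, ⟨0, hs⟩)
  have hcol (U : unitaryGroup (Fin d × Fin s) ℂ) :
      (U : Matrix (Fin d × Fin s) (Fin d × Fin s) ℂ) *ᵥ e₀ = column p₀ U := by
    have : e₀ = Pi.single p₀ 1 := by rw [he₀]; ext; simp [Pi.single_apply]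
    ext r
    simp [this, mulVec_single, column]
  have hexpand (U : unitaryGroup (Fin d × Fin s) ℂ) : ∏ l, ψ U (f l) (g l) =
      ∑ K : Fin T → Fin s, ∏ l, column p₀ U (f l, K l) * conj (column p₀ U (g l, K l)) := by
    simp only [hψ, hcol, prod_univ_sum, Fintype.piFinset_univ]
  have hcard : ∏ i ∈ range T, ((d : ℂ) * s + i) =
      ∏ i ∈ range T, ((Fintype.card (Fin d × Fin s) : ℂ) + i) := by simp
  have hne : ∏ i ∈ range T, ((d : ℂ) * s + i) ≠ 0 := prod_ne_zero_iff.2 fun i _ => by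
    exact_mod_cast (Nat.add_pos_left (Nat.mul_pos hd hs) i).ne'
  rw [integral_congr_ae (.of_forall hexpand),
    integral_finsetSum _ fun K _ => integrable_prod_column_mul_conj μ p₀ _ _,
    eq_inv_mul_iff_mul_eq₀ hne, mul_comm, sum_mul, hcard]
  simp only [integral_prod_column_mul_conj]
  exact sum_card_comp_prod_eq f g

/-- The `T`-th moment of a random induced state:
`∫ ψ_U^{⊗T} dμ(U) = (∏_{i=0}^{T−1}(ds+i))⁻¹ Σ_{π ∈ S_T} s^{c(π)} P_π`, entrywise, where
`ψ_U` is the partial trace over the `s`-dimensional factor of the projector onto the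
Haar-random pure state `Ue₀` in dimension `d·s`.  The Haar probability measure is encoded
as an arbitrary left-invariant Borel probability measure `μ` on the unitary group. -/
theorem stmt_18 (d s T : ℕ) (hd : 0 < d) (hs : 0 < s) (hT : 0 < T)
    (μ : Measure (Matrix.unitaryGroup (Fin d × Fin s) ℂ))
    [IsProbabilityMeasure μ] [μ.IsMulLeftInvariant]
    (e₀ : Fin d × Fin s → ℂ)
    (he₀ : e₀ = fun p => if p = (⟨0, hd⟩, ⟨0, hs⟩) then 1 else 0)
    (ψ : Matrix.unitaryGroup (Fin d × Fin s) ℂ → Matrix (Fin d) (Fin d) ℂ)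
    (hψ : ∀ U i j, ψ U i j =
      ∑ k : Fin s,
        ((U : Matrix (Fin d × Fin s) (Fin d × Fin s) ℂ).mulVec e₀ (i, k)) *
          (starRingEnd ℂ) ((U : Matrix (Fin d × Fin s) (Fin d × Fin s) ℂ).mulVec e₀ (j, k))) :
    ∀ f g : Fin T → Fin d,
      ∫ U, (∏ l : Fin T, ψ U (f l) (g l)) ∂μ
        = (∏ i ∈ Finset.range T, ((d : ℂ) * s + i))⁻¹ *
            ∑ π : Equiv.Perm (Fin T), (s : ℂ) ^ cycleCount π * permOp d T π f g :=
  stmt_18_general d s T hd hs μ e₀ he₀ ψ hψ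
end
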